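/- arXiv:1512.01187 — 6 statements merged into one kernel-verified Lean document; each statement's English description precedes it below -/
import Mathlib

section
/- Let 𝒦 and ℒ be complete DFAs with state sets Q_K, Q_L, initial states q_K = 1 ∈ Q_K and q_L = 1 ∈ Q_L, and let 𝒩 be the shuffle NFA on Q_K × Q_L with initial state (1,1). Then every subset S ⊆ Q_K × Q_L reachable from {(1,1)} in the subset automaton of 𝒩 satisfies Condition (C): there exist states (s,1) ∈ S and (1,t) ∈ S for some s ∈ Q_K and t ∈ Q_L. -/
/-- `IsShuffleOf u v w` means that the word `w` is a shuffle (interleaving)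
of the words `u` and `v`. -/
inductive IsShuffleOf {α : Type*} : List α → List α → List α → Prop
  | nil : IsShuffleOf [] [] []
  | left {a : α} {u v w : List α} : IsShuffleOf u v w → IsShuffleOf (a :: u) v (a :: w)
  | right {a : α} {u v w : List α} : IsShuffleOf u v w → IsShuffleOf u (a :: v) (a :: w)

/-- The shuffle `K ⧢ L` of two languages. -/
def shuffleLang {α : Type*} (K L : Language α) : Language α :=
  {w | ∃ u ∈ K, ∃ v ∈ L, IsShuffleOf u v w}

/-- The shuffle NFA `𝒩` built from two complete DFAs `𝒦` and `ℒ`. -/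
def shuffleNFA {α σK σL : Type*} (K : DFA α σK) (L : DFA α σL) : NFA α (σK × σL) where
  step := fun pq a => {(K.step pq.1 a, pq.2), (pq.1, L.step pq.2 a)}
  start := {(K.start, L.start)}
  accept := {pq | pq.1 ∈ K.accept ∧ pq.2 ∈ L.accept}

/-- `IsStateComplexity L m` says the minimal complete DFA recognizing `L`
has exactly `m` states. -/
def IsStateComplexity {α : Type*} (L : Language α) (m : ℕ) : Prop :=
  (∃ (σ : Type) (_ : Fintype σ) (M : DFA α σ), M.accepts = L ∧ Fintype.card σ = m) ∧
  (∀ (σ : Type) (_ : Fintype σ) (M : DFA α σ), M.accepts = L → m ≤ Fintype.card σ)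

/-
Each component of the shuffle NFA may run on its own while the other one stays put. Starting
from `(1, 1)`, running only `𝒦` on the whole word keeps the second coordinate at `1`, and running
only `ℒ` keeps the first coordinate at `1`.
-/

namespace shuffleNFA

variable {α σK σL : Type*} (K : DFA α σK) (L : DFA α σL)

theorem mem_evalFrom_left {S : Set (σK × σL)} {p : σK} {q : σL} (h : (p, q) ∈ S) (w : List α) :
    (K.evalFrom p w, q) ∈ (shuffleNFA K L).evalFrom S w := by
  induction w generalizing S p with
  | nil => exact h
  | cons a w ih =>
    rw [DFA.evalFrom_cons, NFA.evalFrom_cons]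
    exact ih (NFA.mem_stepSet.2 ⟨(p, q), h, Or.inl rfl⟩)

theorem mem_evalFrom_right {S : Set (σK × σL)} {p : σK} {q : σL} (h : (p, q) ∈ S) (w : List α) :
    (p, L.evalFrom q w) ∈ (shuffleNFA K L).evalFrom S w := by
  induction w generalizing S q with
  | nil => exact h
  | cons a w ih =>
    rw [DFA.evalFrom_cons, NFA.evalFrom_cons]
    exact ih (NFA.mem_stepSet.2 ⟨(p, q), h, Or.inr rfl⟩)

end shuffleNFA

/-- Every subset reachable from `{(q_K, q_L)}` in the subset automaton of the shuffle NFA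
contains a state in column 1 (some `(s, q_L)`) and a state in row 1 (some `(q_K, t)`). -/
theorem stmt_2 {α σK σL : Type*} (K : DFA α σK) (L : DFA α σL)
    (S : Set (σK × σL)) (w : List α)
    (hS : S = (shuffleNFA K L).evalFrom {(K.start, L.start)} w) :
    (∃ s : σK, (s, L.start) ∈ S) ∧ (∃ t : σL, (K.start, t) ∈ S) := by
  subst hS
  have start_mem : (K.start, L.start) ∈ ({(K.start, L.start)} : Set (σK × σL)) := rfl
  exact ⟨⟨_, shuffleNFA.mem_evalFrom_left K L start_mem w⟩,
    ⟨_, shuffleNFA.mem_evalFrom_right K L start_mem w⟩⟩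
end

section
/- Let K and L be regular languages over a finite alphabet Σ with state complexities κ(K) = m and κ(L) = n. Then the state complexity of the shuffle K ⧢ L is at most f(m,n) = 2^{mn−1} + 2^{(m−1)(n−1)}(2^{m−1} − 1)(2^{n−1} − 1). -/
section Counting

variable {X : Type*} [Finite X]

theorem Nat.card_set : Nat.card (Set X) = 2 ^ Nat.card X := by
  classical
  have := Fintype.ofFinite X
  simp only [Nat.card_eq_fintype_card, Fintype.card_set]

theorem Nat.card_subtype_ne (z : X) : Nat.card {y // y ≠ z} = Nat.card X - 1 := by
  classical
  have := Fintype.ofFinite X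
  simp only [Nat.card_eq_fintype_card, Fintype.card_subtype_compl, Fintype.card_subtype_eq]

theorem Nat.card_nonempty_sets : Nat.card {s : Set X // s.Nonempty} = 2 ^ Nat.card X - 1 := by
  classical
  have := Fintype.ofFinite X
  simp only [Set.nonempty_iff_ne_empty, Nat.card_eq_fintype_card, Fintype.card_subtype_compl,
    Fintype.card_subtype_eq, Fintype.card_set]

theorem ncard_setOf_mem_le (z : X) : {S : Set X | z ∈ S}.ncard ≤ 2 ^ (Nat.card X - 1) := by
  rw [← Nat.card_coe_set_eq, ← Nat.card_subtype_ne z, ← Nat.card_set]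
  refine Nat.card_le_card_of_injective (fun S => {y : {y // y ≠ z} | y.1 ∈ S.1}) ?_
  intro S T hST
  ext y
  by_cases hy : y = z
  · subst hy
    exact iff_of_true S.2 T.2
  · exact Set.ext_iff.mp hST ⟨y, hy⟩

end Counting

def setsMeetingRowCol {β γ : Type*} (p₀ : β) (q₀ : γ) : Set (Set (β × γ)) :=
  {S | (∃ q, (p₀, q) ∈ S) ∧ ∃ p, (p, q₀) ∈ S}

section RowCol

variable {β γ : Type*} [Finite β] [Finite γ] (p₀ : β) (q₀ : γ)

theorem ncard_setsMeetingRowCol_diff_le :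
    (setsMeetingRowCol p₀ q₀ \ {S | (p₀, q₀) ∈ S}).ncard ≤
      2 ^ ((Nat.card β - 1) * (Nat.card γ - 1)) *
        (2 ^ (Nat.card β - 1) - 1) * (2 ^ (Nat.card γ - 1) - 1) := by
  have hrow : ∀ S ∈ setsMeetingRowCol p₀ q₀ \ {S | (p₀, q₀) ∈ S},
      {q : {q // q ≠ q₀} | (p₀, q.1) ∈ S}.Nonempty := by
    rintro S ⟨⟨⟨q, hq⟩, -⟩, hz⟩
    exact ⟨⟨q, by rintro rfl; exact hz hq⟩, hq⟩
  have hcol : ∀ S ∈ setsMeetingRowCol p₀ q₀ \ {S | (p₀, q₀) ∈ S},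
      {p : {p // p ≠ p₀} | (p.1, q₀) ∈ S}.Nonempty := by
    rintro S ⟨⟨-, ⟨p, hp⟩⟩, hz⟩
    exact ⟨⟨p, by rintro rfl; exact hz hp⟩, hp⟩
  let trace (S : ↥(setsMeetingRowCol p₀ q₀ \ {S | (p₀, q₀) ∈ S})) :
      Set ({p // p ≠ p₀} × {q // q ≠ q₀}) × {s : Set {p // p ≠ p₀} // s.Nonempty} ×
        {t : Set {q // q ≠ q₀} // t.Nonempty} :=
    ({x | (x.1.1, x.2.1) ∈ S.1}, ⟨_, hcol S.1 S.2⟩, ⟨_, hrow S.1 S.2⟩)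
  have htrace : Function.Injective trace := by
    rintro ⟨S, hS⟩ ⟨T, hT⟩ hST
    simp only [trace, Prod.mk.injEq, Subtype.mk.injEq] at hST
    obtain ⟨hoff, hc, hr⟩ := hST
    ext ⟨p, q⟩
    by_cases hp : p = p₀ <;> by_cases hq : q = q₀
    · subst hp hq
      exact iff_of_false hS.2 hT.2
    · subst hp
      exact Set.ext_iff.mp hr ⟨q, hq⟩
    · subst hq
      exact Set.ext_iff.mp hc ⟨p, hp⟩
    · exact Set.ext_iff.mp hoff (⟨p, hp⟩, ⟨q, hq⟩)
  calc _ = Nat.card ↥(setsMeetingRowCol p₀ q₀ \ {S | (p₀, q₀) ∈ S}) :=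
        (Nat.card_coe_set_eq _).symm
    _ ≤ _ := Nat.card_le_card_of_injective trace htrace
    _ = _ := by
      simp only [Nat.card_prod, Nat.card_set, Nat.card_nonempty_sets, Nat.card_subtype_ne,
        mul_assoc]

theorem card_setsMeetingRowCol_le :
    Nat.card (setsMeetingRowCol p₀ q₀) ≤
      2 ^ (Nat.card β * Nat.card γ - 1) +
        2 ^ ((Nat.card β - 1) * (Nat.card γ - 1)) *
          (2 ^ (Nat.card β - 1) - 1) * (2 ^ (Nat.card γ - 1) - 1) := by
  rw [Nat.card_coe_set_eq, ← Set.ncard_inter_add_ncard_sdiff_eq_ncard _ {S | (p₀, q₀) ∈ S}]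
  refine add_le_add ?_ (ncard_setsMeetingRowCol_diff_le p₀ q₀)
  calc _ ≤ {S : Set (β × γ) | (p₀, q₀) ∈ S}.ncard := Set.ncard_le_ncard Set.inter_subset_right
    _ ≤ _ := by simpa only [Nat.card_prod] using ncard_setOf_mem_le (p₀, q₀)

end RowCol

section Shuffle

variable {α : Type*}

theorem isShuffleOf_nil_iff {u v : List α} : IsShuffleOf u v [] ↔ u = [] ∧ v = [] := by
  constructor
  · rintro ⟨⟩
    exact ⟨rfl, rfl⟩
  · rintro ⟨rfl, rfl⟩
    exact .nil

theorem isShuffleOf_cons_iff {u v w : List α} {a : α} :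
    IsShuffleOf u v (a :: w) ↔
      (∃ u', u = a :: u' ∧ IsShuffleOf u' v w) ∨ ∃ v', v = a :: v' ∧ IsShuffleOf u v' w := by
  constructor
  · rintro (_ | ⟨h⟩ | ⟨h⟩)
    exacts [.inl ⟨_, rfl, h⟩, .inr ⟨_, rfl, h⟩]
  · rintro (⟨u', rfl, h⟩ | ⟨v', rfl, h⟩)
    exacts [.left h, .right h]

variable {σK σL : Type*} (K : DFA α σK) (L : DFA α σL)

theorem mem_shuffleNFA_evalFrom_singleton {w : List α} {pK p : σK} {pL q : σL} :
    (p, q) ∈ (shuffleNFA K L).evalFrom {(pK, pL)} w ↔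
      ∃ u v, IsShuffleOf u v w ∧ K.evalFrom pK u = p ∧ L.evalFrom pL v = q := by
  induction w generalizing pK pL with
  | nil => simp [isShuffleOf_nil_iff, eq_comm]
  | cons a w ih =>
    have hstep : (shuffleNFA K L).step (pK, pL) a = {(K.step pK a, pL)} ∪ {(pK, L.step pL a)} :=
      Set.insert_eq _ _
    rw [NFA.evalFrom_cons, NFA.stepSet_singleton, hstep, NFA.evalFrom_union, Set.mem_union,
      ih, ih]
    constructor
    · rintro (⟨u, v, h, rfl, rfl⟩ | ⟨u, v, h, rfl, rfl⟩)
      exacts [⟨a :: u, v, .left h, rfl, rfl⟩, ⟨u, a :: v, .right h, rfl, rfl⟩]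
    · rintro ⟨u, v, h, rfl, rfl⟩
      rcases isShuffleOf_cons_iff.mp h with ⟨u', rfl, h'⟩ | ⟨v', rfl, h'⟩
      exacts [.inl ⟨u', v, h', rfl, rfl⟩, .inr ⟨u, v', h', rfl, rfl⟩]

theorem shuffleNFA_accepts : (shuffleNFA K L).accepts = shuffleLang K.accepts L.accepts := by
  ext w
  simp only [NFA.mem_accepts, shuffleLang, DFA.mem_accepts]
  constructor
  · rintro ⟨⟨p, q⟩, ⟨hp, hq⟩, hw⟩
    obtain ⟨u, v, h, rfl, rfl⟩ := (mem_shuffleNFA_evalFrom_singleton K L).mp hw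
    exact ⟨u, hp, v, hq, h⟩
  · rintro ⟨u, hu, v, hv, h⟩
    exact ⟨(K.eval u, L.eval v), ⟨hu, hv⟩,
      (mem_shuffleNFA_evalFrom_singleton K L).mpr ⟨u, v, h, rfl, rfl⟩⟩

theorem shuffleNFA_stepSet_mem_setsMeetingRowCol {p₀ : σK} {q₀ : σL} {S : Set (σK × σL)}
    (hS : S ∈ setsMeetingRowCol p₀ q₀) (a : α) :
    (shuffleNFA K L).stepSet S a ∈ setsMeetingRowCol p₀ q₀ := by
  obtain ⟨⟨q, hq⟩, ⟨p, hp⟩⟩ := hS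
  exact ⟨⟨L.step q a, NFA.mem_stepSet.mpr ⟨_, hq, Set.mem_insert_of_mem _ rfl⟩⟩,
    ⟨K.step p a, NFA.mem_stepSet.mpr ⟨_, hp, Set.mem_insert _ _⟩⟩⟩

end Shuffle

namespace DFA

variable {α σ : Type*}

def restrict (M : DFA α σ) (P : Set σ) (hstart : M.start ∈ P)
    (hstep : ∀ s ∈ P, ∀ a, M.step s a ∈ P) : DFA α P where
  step s a := ⟨M.step s a, hstep s s.2 a⟩
  start := ⟨M.start, hstart⟩
  accept := {s | s.1 ∈ M.accept}

variable (M : DFA α σ) (P : Set σ) (hstart : M.start ∈ P) (hstep : ∀ s ∈ P, ∀ a, M.step s a ∈ P)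

theorem evalFrom_restrict (s : P) (w : List α) :
    ((M.restrict P hstart hstep).evalFrom s w : σ) = M.evalFrom s w := by
  induction w generalizing s with
  | nil => rfl
  | cons a w ih => exact ih _

theorem accepts_restrict : (M.restrict P hstart hstep).accepts = M.accepts := by
  ext w
  exact Iff.of_eq (congrArg (· ∈ M.accept) (M.evalFrom_restrict P hstart hstep _ w))

end DFA

def shuffleDFA {α σK σL : Type*} (K : DFA α σK) (L : DFA α σL) :
    DFA α (setsMeetingRowCol K.start L.start) :=
  (shuffleNFA K L).toDFA.restrict _ ⟨⟨L.start, rfl⟩, ⟨K.start, rfl⟩⟩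
    fun _ hS a => shuffleNFA_stepSet_mem_setsMeetingRowCol K L hS a

theorem shuffleDFA_accepts {α σK σL : Type*} (K : DFA α σK) (L : DFA α σL) :
    (shuffleDFA K L).accepts = shuffleLang K.accepts L.accepts :=
  (DFA.accepts_restrict _ _ _ _).trans (NFA.toDFA_correct.trans (shuffleNFA_accepts K L))

theorem exists_isStateComplexity_le {α : Type*} {L : Language α} {σ : Type} [Finite σ]
    (M : DFA α σ) (hM : M.accepts = L) : ∃ k, IsStateComplexity L k ∧ k ≤ Nat.card σ := by
  classical
  let := Fintype.ofFinite σ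
  have hex : ∃ k, ∃ (σ' : Type) (_ : Fintype σ') (M' : DFA α σ'),
      M'.accepts = L ∧ Fintype.card σ' = k :=
    ⟨_, σ, inferInstance, M, hM, rfl⟩
  refine ⟨Nat.find hex,
    ⟨Nat.find_spec hex, fun σ' _ M' hM' => Nat.find_min' hex ⟨σ', _, M', hM', rfl⟩⟩, ?_⟩
  rw [Nat.card_eq_fintype_card]
  exact Nat.find_min' hex ⟨σ, inferInstance, M, hM, rfl⟩

theorem stmt_4_general {α : Type*} (K L : Language α) (m n : ℕ)
    (hK : IsStateComplexity K m) (hL : IsStateComplexity L n) :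
    ∃ k : ℕ, IsStateComplexity (shuffleLang K L) k ∧
      k ≤ 2 ^ (m * n - 1) +
            2 ^ ((m - 1) * (n - 1)) * (2 ^ (m - 1) - 1) * (2 ^ (n - 1) - 1) := by
  obtain ⟨⟨σK, _, MK, rfl, rfl⟩, -⟩ := hK
  obtain ⟨⟨σL, _, ML, rfl, rfl⟩, -⟩ := hL
  obtain ⟨k, hk, hle⟩ := exists_isStateComplexity_le (shuffleDFA MK ML) (shuffleDFA_accepts MK ML)
  refine ⟨k, hk, hle.trans ?_⟩
  simpa only [Nat.card_eq_fintype_card] using card_setsMeetingRowCol_le MK.start ML.start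

/-- Upper bound for shuffle: if `κ(K) = m` and `κ(L) = n`, then the state complexity
of `K ⧢ L` is at most `f(m,n) = 2^(mn-1) + 2^((m-1)(n-1)) (2^(m-1)-1)(2^(n-1)-1)`. -/
theorem stmt_4 {α : Type*} [Fintype α] (K L : Language α) (m n : ℕ)
    (hK : IsStateComplexity K m) (hL : IsStateComplexity L n) :
    ∃ k : ℕ, IsStateComplexity (shuffleLang K L) k ∧
      k ≤ 2 ^ (m * n - 1) +
            2 ^ ((m - 1) * (n - 1)) * (2 ^ (m - 1) - 1) * (2 ^ (n - 1) - 1) :=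
  stmt_4_general K L m n hK hL
end

section
/- Let 𝒦 and ℒ be complete DFAs with state sets Q_K = {1,…,m} and Q_L = {1,…,n}, initial states 1 and 1, and let 𝒩 be the shuffle NFA on Q_K × Q_L. Fix s ∈ {2,…,m} and let A_s = {(1,1),(s,1)}. If S ⊆ Q_K × Q_L is a subset reachable from {(1,1)} in the subset automaton of 𝒩, S ≠ A_s, and δ(S,a) = A_s for some letter a, then S = {(1,1)}. -/

lemma shuffle_keep_left {α σK σL : Type*} (K : DFA α σK) (L : DFA α σL) (w : List α) :
    ∀ (T : Set (σK × σL)) (p : σK) (q : σL), (p, q) ∈ T →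
      (p, L.evalFrom q w) ∈ (shuffleNFA K L).evalFrom T w := by
  induction w with
  | nil => intro T p q h; simpa [NFA.evalFrom, DFA.evalFrom] using h
  | cons a w ih =>
    intro T p q h
    have hmem : (p, L.step q a) ∈ (shuffleNFA K L).stepSet T a := by
      rw [NFA.mem_stepSet]
      exact ⟨(p, q), h, by simp [shuffleNFA]⟩
    have := ih ((shuffleNFA K L).stepSet T a) p (L.step q a) hmem
    simpa [NFA.evalFrom, DFA.evalFrom] using this

/-- If a reachable subset `S` of the subset automaton of the shuffle NFA goes to
`A_s = {(1,1),(s,1)}` (with `s ≠ 1`) on some letter `a`, and `S ≠ A_s`,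
then `S = {(1,1)}`.  Here states are numbered so that 1 becomes `0 : Fin m`. -/
theorem stmt_6 {α : Type*} {m n : ℕ} [NeZero m] [NeZero n]
    (K : DFA α (Fin m)) (L : DFA α (Fin n))
    (hK : K.start = 0) (hL : L.start = 0)
    (s : Fin m) (hs : s ≠ 0)
    (S : Set (Fin m × Fin n)) (w : List α)
    (hreach : S = (shuffleNFA K L).evalFrom {((0 : Fin m), (0 : Fin n))} w)
    (a : α)
    (hne : S ≠ {((0 : Fin m), (0 : Fin n)), (s, (0 : Fin n))})
    (hstep : (shuffleNFA K L).stepSet S a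
      = {((0 : Fin m), (0 : Fin n)), (s, (0 : Fin n))}) :
    S = {((0 : Fin m), (0 : Fin n))} := by
  have hsub : S ⊆ {((0 : Fin m), (0 : Fin n)), (s, (0 : Fin n))} := by
    rintro ⟨p, q⟩ hpq
    have h1 : (K.step p a, q) ∈ (shuffleNFA K L).stepSet S a := by
      rw [NFA.mem_stepSet]; exact ⟨(p, q), hpq, by simp [shuffleNFA]⟩
    have h2 : (p, L.step q a) ∈ (shuffleNFA K L).stepSet S a := by
      rw [NFA.mem_stepSet]; exact ⟨(p, q), hpq, by simp [shuffleNFA]⟩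
    rw [hstep] at h1 h2
    have hq : q = 0 := by
      rcases h1 with h1 | h1 <;> exact (Prod.ext_iff.mp h1).2
    have hp : p = 0 ∨ p = s := by
      rcases h2 with h2 | h2
      · exact Or.inl (Prod.ext_iff.mp h2).1
      · exact Or.inr (Prod.ext_iff.mp h2).1
    rcases hp with hp | hp
    · left; simp [hp, hq]
    · right; simp [hp, hq]
  have h00 : ((0 : Fin m), (0 : Fin n)) ∈ S := by
    have hx : ((0 : Fin m), L.evalFrom 0 w) ∈ S := by
      rw [hreach]
      exact shuffle_keep_left K L w _ 0 0 rfl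
    have := hsub hx
    rcases this with h | h
    · have : L.evalFrom 0 w = 0 := (Prod.ext_iff.mp h).2
      rwa [this] at hx
    · exact absurd (Prod.ext_iff.mp h).1.symm hs
  have hns : (s, (0 : Fin n)) ∉ S := by
    intro hsS
    apply hne
    apply Set.Subset.antisymm hsub
    rintro x (hx | hx) <;> subst hx
    · exact h00
    · exact hsS
  apply Set.Subset.antisymm
  · intro x hx
    rcases hsub hx with h | h
    · exact h
    · exact absurd (h ▸ hx) hns
  · rintro x hx; rw [Set.mem_singleton_iff] at hx; subst hx; exact h00
end

section
/- Let S be a valid subset of Q_m × Q_n (i.e., S contains a state in row 1 and a state in column 1) such that either some row i′ contains a distinct row i of S, or some column j′ contains a distinct column j of S. Assume that every valid subset S′ of Q_{m′} × Q_{n′} with m′ < m, or n′ < n, or |S′| < |S| is reachable in the extremal subset automaton 𝒟_{m′,n′}. Then S is reachable in 𝒟_{m,n}. -/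
/-- The extremal shuffle NFA `𝒩_{m,n}`: its alphabet `Σ_{m,n}` has one letter for
every pair of transformations of `Q_m = Fin m` and `Q_n = Fin n`, its state set is
`Q_m × Q_n`, its initial state is `(1,1)` (here `(0,0)`), and a letter
`a = (s,t)` takes `(p,q)` to `{(s p, q), (p, t q)}`. -/
def extremalNFA (m n : ℕ) :
    NFA ((Fin m → Fin m) × (Fin n → Fin n)) (Fin m × Fin n) where
  step := fun pq a => {(a.1 pq.1, pq.2), (pq.1, a.2 pq.2)}
  start := {pq | pq.1.val = 0 ∧ pq.2.val = 0}
  accept := ∅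

/-- A subset `S ⊆ Q_m × Q_n` is valid if it contains a state in column 1
and a state in row 1 (Condition (C)). -/
def ValidSubset {m n : ℕ} (S : Set (Fin m × Fin n)) : Prop :=
  (∃ p ∈ S, p.2.val = 0) ∧ (∃ p ∈ S, p.1.val = 0)

/-- `S` is reachable in the subset automaton `𝒟_{m,n}` of the extremal shuffle NFA,
i.e. it is obtained from the initial subset `{(1,1)}` by reading some word. -/
def ReachableIn {m n : ℕ} (S : Set (Fin m × Fin n)) : Prop :=
  ∃ w : List ((Fin m → Fin m) × (Fin n → Fin n)),
    S = (extremalNFA m n).evalFrom (extremalNFA m n).start w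

lemma stepSet_image {m n m' n' : ℕ}
    (F : Fin m × Fin n → Fin m' × Fin n')
    (L : (Fin m → Fin m) × (Fin n → Fin n) → (Fin m' → Fin m') × (Fin n' → Fin n'))
    (hstep : ∀ x a, (extremalNFA m' n').step (F x) (L a) = F '' (extremalNFA m n).step x a)
    (T : Set (Fin m × Fin n)) (a : (Fin m → Fin m) × (Fin n → Fin n)) :
    (extremalNFA m' n').stepSet (F '' T) (L a) = F '' (extremalNFA m n).stepSet T a := by
  ext y
  simp only [NFA.stepSet, Set.mem_iUnion, Set.mem_image, exists_prop]
  constructor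
  · rintro ⟨z, ⟨x, hx, rfl⟩, hy⟩
    rw [hstep] at hy
    obtain ⟨u, hu, rfl⟩ := hy
    exact ⟨u, ⟨x, hx, hu⟩, rfl⟩
  · rintro ⟨u, ⟨x, hx, hu⟩, rfl⟩
    exact ⟨F x, ⟨x, hx, rfl⟩, by rw [hstep]; exact ⟨u, hu, rfl⟩⟩

lemma evalFrom_image {m n m' n' : ℕ}
    (F : Fin m × Fin n → Fin m' × Fin n')
    (L : (Fin m → Fin m) × (Fin n → Fin n) → (Fin m' → Fin m') × (Fin n' → Fin n'))
    (hstep : ∀ x a, (extremalNFA m' n').step (F x) (L a) = F '' (extremalNFA m n).step x a)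
    (T : Set (Fin m × Fin n)) (w : List ((Fin m → Fin m) × (Fin n → Fin n))) :
    (extremalNFA m' n').evalFrom (F '' T) (w.map L) = F '' (extremalNFA m n).evalFrom T w := by
  induction w generalizing T with
  | nil => simp [NFA.evalFrom]
  | cons a w ihw =>
    simp only [List.map_cons, NFA.evalFrom, List.foldl_cons] at *
    rw [stepSet_image F L hstep, ihw]

lemma reachable_image {m n m' n' : ℕ}
    (F : Fin m × Fin n → Fin m' × Fin n')
    (L : (Fin m → Fin m) × (Fin n → Fin n) → (Fin m' → Fin m') × (Fin n' → Fin n'))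
    (hstep : ∀ x a, (extremalNFA m' n').step (F x) (L a) = F '' (extremalNFA m n).step x a)
    (hstart : F '' (extremalNFA m n).start = (extremalNFA m' n').start)
    {S : Set (Fin m × Fin n)} (h : ReachableIn S) : ReachableIn (F '' S) := by
  obtain ⟨w, rfl⟩ := h
  exact ⟨w.map L, by rw [← hstart, evalFrom_image F L hstep]⟩

lemma reach_swap {m n : ℕ} {S : Set (Fin m × Fin n)} (h : ReachableIn S) :
    ReachableIn (Prod.swap '' S) := by
  apply reachable_image Prod.swap (fun a => (a.2, a.1)) ?_ ?_ h
  · rintro ⟨p, q⟩ ⟨s, t⟩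
    ext y
    simp only [extremalNFA, Set.mem_insert_iff, Set.mem_singleton_iff, Set.image_insert_eq,
      Set.image_singleton, Prod.swap]
    tauto
  · ext ⟨p, q⟩
    simp only [extremalNFA, Set.mem_image, Set.mem_setOf_eq, Prod.exists, Prod.swap_prod_mk]
    constructor
    · rintro ⟨a, b, ⟨h1, h2⟩, h3⟩
      cases h3; exact ⟨h2, h1⟩
    · rintro ⟨h1, h2⟩
      exact ⟨q, p, ⟨h2, h1⟩, rfl⟩

lemma swap_swap_image {m n : ℕ} (S : Set (Fin m × Fin n)) :
    Prod.swap '' (Prod.swap '' S) = S := by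
  simp [Set.image_image]

lemma valid_swap {m n : ℕ} {S : Set (Fin m × Fin n)} (h : ValidSubset S) :
    ValidSubset (Prod.swap '' S) := by
  obtain ⟨⟨p, hp, hp2⟩, ⟨q, hq, hq1⟩⟩ := h
  exact ⟨⟨q.swap, ⟨q, hq, rfl⟩, hq1⟩, ⟨p.swap, ⟨p, hp, rfl⟩, hp2⟩⟩

lemma reach_step {m n : ℕ} {T S : Set (Fin m × Fin n)} (hT : ReachableIn T)
    (a : (Fin m → Fin m) × (Fin n → Fin n))
    (h : (extremalNFA m n).stepSet T a = S) : ReachableIn S := by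
  obtain ⟨w, rfl⟩ := hT
  exact ⟨w ++ [a], by simp only [NFA.evalFrom, List.foldl_append, List.foldl_cons, List.foldl_nil]; exact h.symm⟩
lemma caseB {m n : ℕ} (S : Set (Fin m × Fin n)) (hvalid : ValidSubset S)
    (i i' : Fin m) (hne : i ≠ i') (hrow : ∀ j : Fin n, (i, j) ∈ S → (i', j) ∈ S)
    (ih : ∀ (m' n' : ℕ) (S' : Set (Fin m' × Fin n')), ValidSubset S' →
      (m' < m ∨ n' < n ∨ S'.ncard < S.ncard) → ReachableIn S')
    (hrowi : ∃ j, (i, j) ∈ S)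
    (hgood : i'.val ≠ 0 ∨ ∃ j, (i', j) ∈ S ∧ (i, j) ∉ S) :
    ReachableIn S := by
  set T : Set (Fin m × Fin n) := {pq | pq ∈ S ∧ (pq.1 = i' → (i, pq.2) ∉ S)} with hTdef
  have hTsub : T ⊆ S := fun x hx => hx.1
  have hTvalid : ValidSubset T := by
    constructor
    · obtain ⟨⟨p, q⟩, hp, hq⟩ := hvalid.1
      by_cases h : p = i' ∧ (i, q) ∈ S
      · exact ⟨(i, q), ⟨h.2, fun hi => absurd hi hne⟩, hq⟩
      · exact ⟨(p, q), ⟨hp, fun hpi hiq => h ⟨hpi, hiq⟩⟩, hq⟩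
    · obtain ⟨⟨p, q⟩, hp, hq⟩ := hvalid.2
      by_cases h : p = i' ∧ (i, q) ∈ S
      · rcases hgood with h0 | ⟨j, hj1, hj2⟩
        · exact absurd (h.1 ▸ hq) h0
        · exact ⟨(i', j), ⟨hj1, fun _ => hj2⟩, by rw [← h.1]; exact hq⟩
      · exact ⟨(p, q), ⟨hp, fun hpi hiq => h ⟨hpi, hiq⟩⟩, hq⟩
  have hTlt : T.ncard < S.ncard := by
    obtain ⟨j, hj⟩ := hrowi
    apply Set.ncard_lt_ncard ?_ S.toFinite
    refine ⟨hTsub, fun hST => ?_⟩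
    exact (hST (hrow j hj)).2 rfl hj
  have hTreach := ih m n T hTvalid (Or.inr (Or.inr hTlt))
  refine reach_step hTreach (fun p => if p = i then i' else p, id) ?_
  ext ⟨p, q⟩
  simp only [NFA.stepSet, extremalNFA, Set.mem_iUnion, Set.mem_insert_iff,
    Set.mem_singleton_iff, exists_prop, Prod.exists, id_eq]
  constructor
  · rintro ⟨a, b, hab, h1 | h1⟩
    · cases h1
      split_ifs with ha
      · subst ha; exact hrow _ hab.1
      · exact hab.1
    · cases h1; exact hab.1
  · intro hpq
    by_cases h : p = i' ∧ (i, q) ∈ S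
    · refine ⟨i, q, ⟨h.2, fun hi => absurd hi hne⟩, Or.inl ?_⟩
      simp [h.1]
    · exact ⟨p, q, ⟨hpq, fun hpi hiq => h ⟨hpi, hiq⟩⟩, Or.inr rfl⟩
lemma auxRow {m n : ℕ} (S : Set (Fin m × Fin n)) (hvalid : ValidSubset S)
    (i i' : Fin m) (hne : i ≠ i') (hrow : ∀ j : Fin n, (i, j) ∈ S → (i', j) ∈ S)
    (ih : ∀ (m' n' : ℕ) (S' : Set (Fin m' × Fin n')), ValidSubset S' →
      (m' < m ∨ n' < n ∨ S'.ncard < S.ncard) → ReachableIn S') :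
    ReachableIn S := by
  by_cases hrowi : ∃ j, (i, j) ∈ S
  · by_cases hbad : i'.val = 0 ∧ ∀ j, (i', j) ∈ S → (i, j) ∈ S
    · obtain ⟨j0, hj0⟩ := hrowi
      refine caseB S hvalid i' i hne.symm hbad.2 ih ⟨j0, hrow _ hj0⟩ (Or.inl ?_)
      intro h0
      exact hne (Fin.val_injective (h0.trans hbad.1.symm))
    · refine caseB S hvalid i i' hne hrow ih hrowi ?_
      by_cases h0 : i'.val = 0
      · right
        push_neg at hbad
        exact hbad h0
      · exact Or.inl h0
  · -- Case A: row i is empty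
    push_neg at hrowi
    obtain ⟨⟨p0, q0⟩, hmem0, hv0⟩ := hvalid.2
    obtain ⟨m', rfl⟩ : ∃ m', m = m' + 1 :=
      ⟨m - 1, (Nat.succ_pred_eq_of_pos (Nat.pos_of_ne_zero (by rintro rfl; exact i.elim0))).symm⟩
    have hi0 : i ≠ 0 := by
      rintro rfl
      exact hrowi q0 ((Fin.val_injective hv0 : p0 = (0 : Fin (m' + 1))) ▸ hmem0)
    obtain ⟨k, rfl⟩ : ∃ k, m' = k + 1 := by
      refine ⟨m' - 1, (Nat.succ_pred_eq_of_pos (Nat.pos_of_ne_zero ?_)).symm⟩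
      rintro rfl
      exact hi0 (Fin.val_injective (by have := i.isLt; simp only [Fin.val_zero]; omega))
    set e : Fin (k + 1) → Fin (k + 2) := i.succAbove with he_def
    have he_inj : Function.Injective e := Fin.succAbove_right_injective
    have he0 : e 0 = 0 := by
      rw [he_def, Fin.succAbove_of_castSucc_lt]
      · exact Fin.castSucc_zero
      · rw [Fin.castSucc_zero]
        exact Fin.pos_of_ne_zero hi0
    set S₀ : Set (Fin (k + 1) × Fin n) := (Prod.map e id) ⁻¹' S with hS0_def
    have hS0valid : ValidSubset S₀ := by
      constructor
      · obtain ⟨⟨pc, qc⟩, hc, hqc⟩ := hvalid.1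
        have hpne : pc ≠ i := by rintro rfl; exact hrowi qc hc
        obtain ⟨a, ha⟩ := Fin.exists_succAbove_eq hpne
        refine ⟨(a, qc), ?_, hqc⟩
        show Prod.map e id (a, qc) ∈ S
        simp only [Prod.map, id, he_def]
        rw [ha]
        exact hc
      · have hp00 : p0 = 0 := Fin.val_injective hv0
        refine ⟨(0, q0), ?_, rfl⟩
        simp only [hS0_def, Set.mem_preimage, Prod.map, he0, id]
        rwa [← hp00]
    have hreach0 := ih (k + 1) n S₀ hS0valid (Or.inl (Nat.lt_succ_self _))
    have hstep : ∀ (x : Fin (k+1) × Fin n) a,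
        (extremalNFA (k+2) n).step (Prod.map e id x)
          ((Function.extend e (e ∘ a.1) id, a.2)) = Prod.map e id '' (extremalNFA (k+1) n).step x a := by
      rintro ⟨p, q⟩ ⟨s, t⟩
      simp only [extremalNFA, Set.image_insert_eq, Set.image_singleton, Prod.map, id]
      rw [he_inj.extend_apply]
      rfl
    have hstart : Prod.map e id '' (extremalNFA (k+1) n).start = (extremalNFA (k+2) n).start := by
      ext ⟨p, q⟩
      simp only [extremalNFA, Set.mem_image, Set.mem_setOf_eq, Prod.exists, Prod.map]
      constructor
      · rintro ⟨a, b, ⟨ha, hb⟩, heq⟩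
        have ha0 : a = 0 := Fin.val_injective ha
        subst ha0
        cases heq
        rw [he0]
        exact ⟨rfl, hb⟩
      · rintro ⟨hp, hq⟩
        refine ⟨0, q, ⟨rfl, hq⟩, ?_⟩
        rw [he0]
        have : p = 0 := Fin.val_injective hp
        rw [this]
        rfl
    have himg : Prod.map e id '' S₀ = S := by
      rw [hS0_def, Set.image_preimage_eq_inter_range]
      apply Set.inter_eq_self_of_subset_left
      rintro ⟨p, q⟩ hpq
      have hpne : p ≠ i := by rintro rfl; exact hrowi q hpq
      obtain ⟨a, ha⟩ := Fin.exists_succAbove_eq hpne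
      exact ⟨(a, q), by simp [Prod.map, he_def, ha]⟩
    have := reachable_image (Prod.map e id) (fun a => (Function.extend e (e ∘ a.1) id, a.2))
      hstep hstart hreach0
    rwa [himg] at this
/-- If a valid subset `S` has a row containing another (distinct) row, or a column
containing another (distinct) column, and every valid subset `S'` of `Q_{m'} × Q_{n'}`
with `m' < m`, or `n' < n`, or `|S'| < |S|` is reachable in `𝒟_{m',n'}`,
then `S` is reachable in `𝒟_{m,n}`. -/
theorem stmt_8 {m n : ℕ} (S : Set (Fin m × Fin n))
    (hvalid : ValidSubset S)
    (hcontain :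
      (∃ i i' : Fin m, i ≠ i' ∧ ∀ j : Fin n, (i, j) ∈ S → (i', j) ∈ S) ∨
      (∃ j j' : Fin n, j ≠ j' ∧ ∀ i : Fin m, (i, j) ∈ S → (i, j') ∈ S))
    (ih : ∀ (m' n' : ℕ) (S' : Set (Fin m' × Fin n')), ValidSubset S' →
      (m' < m ∨ n' < n ∨ S'.ncard < S.ncard) → ReachableIn S') :
    ReachableIn S := by
  rcases hcontain with ⟨i, i', hne, hrow⟩ | ⟨j, j', hne, hcol⟩
  · exact auxRow S hvalid i i' hne hrow ih
  · have h1 : ReachableIn (Prod.swap '' S) := by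
      refine auxRow (Prod.swap '' S) (valid_swap hvalid) j j' hne ?_ ?_
      · rintro p ⟨⟨a, b⟩, hab, hab2⟩
        have : a = p ∧ b = j := by
          refine ⟨congrArg Prod.snd hab2, congrArg Prod.fst hab2⟩
        obtain ⟨rfl, rfl⟩ := this
        exact ⟨(a, j'), hcol a hab, rfl⟩
      · intro m' n' S' hv hlt
        have hcond : n' < m ∨ m' < n ∨ (Prod.swap '' S').ncard < S.ncard := by
          simp only [Set.ncard_image_of_injective _ Prod.swap_injective] at hlt ⊢
          tauto
        have h2 := reach_swap (ih n' m' (Prod.swap '' S') (valid_swap hv) hcond)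
        rwa [swap_swap_image] at h2
    have h3 := reach_swap h1
    rwa [swap_swap_image] at h3
end

section
/- Let m, n ≥ 2 and let S be a valid subset of Q_m × Q_n such that some column or some row of S contains exactly one element. Assume that every valid subset S′ of Q_{m′} × Q_{n′} with m′ < m, or n′ < n, or |S′| < |S| is reachable in the extremal subset automaton 𝒟_{m′,n′}. Then S is reachable in 𝒟_{m,n}. -/
/-!
Let `(r, c)` be the only state of `S` in column `c`; the row case is the same after swapping the
two components, a symmetry of the extremal automaton. If row `r` contains another state `(r, q)`,
then `S` arises from the smaller set `S \ {(r, q)}` by the letter `(id, c ↦ q)`, which copies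
`(r, c)` to `(r, q)` and fixes every other state. That set is valid unless `q = 0` and `(r, 0)` is
alone in column `0`, and then the roles of `c` and `0` are exchanged.

If `(r, c)` is alone in its row and its column, the rest of `S` lies in a copy of
`Q_{m-1} × Q_{n-1}`, where it is reachable by induction. Lifting that word to letters that fix
row `r` and column `c` reaches `S` from a valid two-element set, and every valid set with at most
two elements is reachable by at most two letters.
-/

namespace NFA

variable {α α' σ σ' : Type*} {M : NFA α σ} {M' : NFA α' σ'}

theorem stepSet_insert (s : σ) (T : Set σ) (a : α) :
    M.stepSet (insert s T) a = M.step s a ∪ M.stepSet T a := by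
  rw [Set.insert_eq, stepSet_union, stepSet_singleton]

theorem stepSet_image {φ : σ → σ'} {ψ : α → α'}
    (h : ∀ s a, M'.step (φ s) (ψ a) = φ '' M.step s a) (T : Set σ) (a : α) :
    M'.stepSet (φ '' T) (ψ a) = φ '' M.stepSet T a := by
  simp [stepSet, Set.image_iUnion₂, h]

theorem evalFrom_map {F : Set σ → Set σ'} {ψ : α → α'}
    (h : ∀ T a, M'.stepSet (F T) (ψ a) = F (M.stepSet T a)) (w : List α) (T : Set σ) :
    M'.evalFrom (F T) (w.map ψ) = F (M.evalFrom T w) := by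
  induction w generalizing T with
  | nil => rfl
  | cons a w ih => simp [h, ih]

end NFA

section Extremal

variable {m n m' n' : ℕ}

theorem extremalNFA_step (p : Fin m × Fin n) (a : (Fin m → Fin m) × (Fin n → Fin n)) :
    (extremalNFA m n).step p a = {(a.1 p.1, p.2), (p.1, a.2 p.2)} :=
  rfl

theorem extremalNFA_start : (extremalNFA (m + 1) (n + 1)).start = {(0, 0)} := by
  ext ⟨p, q⟩
  simp only [extremalNFA, Set.mem_ofPred_eq, Set.mem_singleton_iff, Prod.mk.injEq,
    Fin.val_eq_zero_iff]

theorem validSubset_iff {S : Set (Fin (m + 1) × Fin (n + 1))} :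
    ValidSubset S ↔ (∃ p ∈ S, p.2 = 0) ∧ ∃ p ∈ S, p.1 = 0 := by
  simp only [ValidSubset, Fin.val_eq_zero_iff]

theorem ValidSubset.image_swap {S : Set (Fin m × Fin n)} (hS : ValidSubset S) :
    ValidSubset (Prod.swap '' S) :=
  let ⟨⟨p, hp, hp0⟩, ⟨q, hq, hq0⟩⟩ := hS
  ⟨⟨q.swap, Set.mem_image_of_mem _ hq, hq0⟩, ⟨p.swap, Set.mem_image_of_mem _ hp, hp0⟩⟩

theorem reachableIn_start : ReachableIn (extremalNFA m n).start := ⟨[], rfl⟩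

theorem ReachableIn.stepSet {T : Set (Fin m × Fin n)} (hT : ReachableIn T)
    (a : (Fin m → Fin m) × (Fin n → Fin n)) :
    ReachableIn ((extremalNFA m n).stepSet T a) := by
  obtain ⟨w, rfl⟩ := hT
  exact ⟨w ++ [a], by simp⟩

theorem ReachableIn.map {T : Set (Fin m × Fin n)} (hT : ReachableIn T)
    {F : Set (Fin m × Fin n) → Set (Fin m' × Fin n')}
    {ψ : (Fin m → Fin m) × (Fin n → Fin n) → (Fin m' → Fin m') × (Fin n' → Fin n')}
    (hF : ∀ T a, (extremalNFA m' n').stepSet (F T) (ψ a) = F ((extremalNFA m n).stepSet T a))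
    (hstart : ReachableIn (F (extremalNFA m n).start)) : ReachableIn (F T) := by
  obtain ⟨u, hu⟩ := hstart
  obtain ⟨w, rfl⟩ := hT
  exact ⟨u ++ w.map ψ, by rw [NFA.evalFrom_append, ← hu, NFA.evalFrom_map hF]⟩

theorem extremalNFA_step_swap (p : Fin m × Fin n) (a : (Fin m → Fin m) × (Fin n → Fin n)) :
    (extremalNFA n m).step p.swap a.swap = Prod.swap '' (extremalNFA m n).step p a := by
  simp [extremalNFA_step, Set.image_pair, Set.pair_comm]

theorem ReachableIn.image_swap {S : Set (Fin m × Fin n)} (hS : ReachableIn S) :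
    ReachableIn (Prod.swap '' S) :=
  hS.map (NFA.stepSet_image extremalNFA_step_swap)
    ⟨[], by ext; simp [extremalNFA, Set.image_swap_eq_preimage_swap, and_comm]⟩

end Extremal

section Pairs

variable {m n : ℕ}

theorem reachableIn_pair_col_row (i : Fin (m + 1)) (j : Fin (n + 1)) :
    ReachableIn ({(i, 0), (0, j)} : Set (Fin (m + 1) × Fin (n + 1))) := by
  simpa only [extremalNFA_start, NFA.stepSet_singleton, extremalNFA_step] using
    reachableIn_start.stepSet (fun _ => i, fun _ => j)

theorem reachableIn_pair_zero (i : Fin (m + 1)) (j : Fin (n + 1)) :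
    ReachableIn ({(0, 0), (i, j)} : Set (Fin (m + 1) × Fin (n + 1))) := by
  simpa only [NFA.stepSet_insert, NFA.stepSet_singleton, extremalNFA_step,
    Equiv.swap_apply_left, Equiv.swap_apply_right, Set.pair_comm (i, j) (0, 0),
    Set.union_self] using
    (reachableIn_pair_col_row i j).stepSet (Equiv.swap 0 i, Equiv.swap 0 j)

theorem reachableIn_pair_of_validSubset {p q : Fin (m + 1) × Fin (n + 1)}
    (h : ValidSubset ({p, q} : Set (Fin (m + 1) × Fin (n + 1)))) : ReachableIn {p, q} := by
  obtain ⟨⟨x, hx, hx0⟩, ⟨y, hy, hy0⟩⟩ := validSubset_iff.1 h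
  obtain ⟨a, b⟩ := p
  obtain ⟨c, d⟩ := q
  rcases hx with rfl | rfl <;> rcases hy with rfl | rfl <;> dsimp only at hx0 hy0 <;>
    subst hx0 hy0
  · exact reachableIn_pair_zero c d
  · exact reachableIn_pair_col_row a d
  · rw [Set.pair_comm]
    exact reachableIn_pair_col_row c b
  · rw [Set.pair_comm]
    exact reachableIn_pair_zero a b

end Pairs

theorem Fin.exists_injective_range_eq_compl_singleton {k : ℕ} {r z : Fin (k + 2)}
    (hz : z ≠ r) : ∃ f : Fin (k + 1) → Fin (k + 2),
      Function.Injective f ∧ Set.range f = {r}ᶜ ∧ f 0 = z := by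
  obtain ⟨i, rfl⟩ := Fin.exists_succAbove_eq hz
  refine ⟨r.succAbove ∘ Equiv.swap 0 i, Fin.succAbove_right_injective.comp (Equiv.injective _),
    ?_, by simp⟩
  rw [Set.range_comp, Equiv.range_eq_univ, Set.image_univ, Fin.range_succAbove]

section Simulation

variable {m n m' n' : ℕ} {f : Fin m' → Fin m} {g : Fin n' → Fin n} {r : Fin m} {c : Fin n}

noncomputable def liftLetter (f : Fin m' → Fin m) (g : Fin n' → Fin n) (r : Fin m) (c : Fin n)
    (a : (Fin m' → Fin m') × (Fin n' → Fin n')) : (Fin m → Fin m) × (Fin n → Fin n) :=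
  (Function.extend f (f ∘ a.1) fun _ => r, Function.extend g (g ∘ a.2) fun _ => c)

theorem extremalNFA_step_map_liftLetter (hf : Function.Injective f)
    (hg : Function.Injective g) (p : Fin m' × Fin n')
    (a : (Fin m' → Fin m') × (Fin n' → Fin n')) :
    (extremalNFA m n).step (Prod.map f g p) (liftLetter f g r c a) =
      Prod.map f g '' (extremalNFA m' n').step p a := by
  simp [extremalNFA_step, liftLetter, hf.extend_apply, hg.extend_apply, Set.image_pair]

theorem extremalNFA_step_liftLetter_of_notMem_range (hr : r ∉ Set.range f)
    (hc : c ∉ Set.range g) (a : (Fin m' → Fin m') × (Fin n' → Fin n')) :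
    (extremalNFA m n).step (r, c) (liftLetter f g r c a) = {(r, c)} := by
  simp [extremalNFA_step, liftLetter, Function.extend_apply' _ _ _ hr,
    Function.extend_apply' _ _ _ hc]

theorem ReachableIn.insert_image_prodMap (hf : Function.Injective f)
    (hg : Function.Injective g) (hr : r ∉ Set.range f) (hc : c ∉ Set.range g)
    (hstart : ReachableIn (insert (r, c) (Prod.map f g '' (extremalNFA m' n').start)))
    {T : Set (Fin m' × Fin n')} (hT : ReachableIn T) :
    ReachableIn (insert (r, c) (Prod.map f g '' T)) := by
  refine hT.map (F := fun U => insert (r, c) (Prod.map f g '' U)) (ψ := liftLetter f g r c)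
    (fun U a => ?_) hstart
  rw [NFA.stepSet_insert, extremalNFA_step_liftLetter_of_notMem_range hr hc,
    NFA.stepSet_image (extremalNFA_step_map_liftLetter hf hg), Set.singleton_union]

end Simulation

theorem exists_mem_image_and_or_eq {γ α : Type*} {π : γ → α} {S₀ : Set γ}
    (hne : S₀.Nonempty) {x : γ} {a : α} (h : ∃ y ∈ insert x S₀, π y = a) :
    ∃ z ∈ π '' S₀, π x = a ∨ z = a := by
  by_cases hx : π x = a
  · exact ⟨π hne.some, Set.mem_image_of_mem π hne.some_mem, Or.inl hx⟩
  obtain ⟨y, rfl | hy, rfl⟩ := h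
  · exact absurd rfl hx
  · exact ⟨π y, Set.mem_image_of_mem π hy, Or.inr rfl⟩

theorem reachableIn_insert_of_isolated {m n : ℕ} {S₀ : Set (Fin (m + 2) × Fin (n + 2))}
    {r : Fin (m + 2)} {c : Fin (n + 2)} (hrow : ∀ x ∈ S₀, x.1 ≠ r)
    (hcol : ∀ x ∈ S₀, x.2 ≠ c) (hne : S₀.Nonempty) (hvalid : ValidSubset (insert (r, c) S₀))
    (ih : ∀ S' : Set (Fin (m + 1) × Fin (n + 1)), ValidSubset S' → ReachableIn S') :
    ReachableIn (insert (r, c) S₀) := by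
  obtain ⟨hvalid_col, hvalid_row⟩ := validSubset_iff.1 hvalid
  obtain ⟨-, ⟨xr, hxr, rfl⟩, hzr⟩ := exists_mem_image_and_or_eq hne hvalid_row
  obtain ⟨-, ⟨xc, hxc, rfl⟩, hzc⟩ := exists_mem_image_and_or_eq hne hvalid_col
  -- Row `f 0` and column `g 0` meet `S₀`, and are `0` unless `r = 0` (resp. `c = 0`):
  -- this makes both the pulled-back set and the starting pair `{(r, c), (f 0, g 0)}` valid.
  obtain ⟨f, hf, hfr, hf0⟩ := Fin.exists_injective_range_eq_compl_singleton (hrow xr hxr)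
  obtain ⟨g, hg, hgc, hg0⟩ := Fin.exists_injective_range_eq_compl_singleton (hcol xc hxc)
  have himage : Prod.map f g '' (Prod.map f g ⁻¹' S₀) = S₀ :=
    Set.image_preimage_eq_of_subset fun x hx => by
      rw [Set.range_prodMap, hfr, hgc]
      exact ⟨hrow x hx, hcol x hx⟩
  have hvalid' : ValidSubset (Prod.map f g ⁻¹' S₀) := by
    rw [← himage] at hxr hxc
    obtain ⟨yr, hyr, rfl⟩ := hxr
    obtain ⟨yc, hyc, rfl⟩ := hxc
    exact validSubset_iff.2 ⟨⟨yc, hyc, hg (by simpa using hg0.symm)⟩,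
      ⟨yr, hyr, hf (by simpa using hf0.symm)⟩⟩
  have hpair :
      ReachableIn (insert (r, c) (Prod.map f g '' (extremalNFA (m + 1) (n + 1)).start)) := by
    rw [extremalNFA_start, Set.image_singleton, Prod.map_apply, hf0, hg0]
    exact reachableIn_pair_of_validSubset (validSubset_iff.2
      ⟨hzc.elim (⟨_, Or.inl rfl, ·⟩) (⟨_, Or.inr rfl, ·⟩),
        hzr.elim (⟨_, Or.inl rfl, ·⟩) (⟨_, Or.inr rfl, ·⟩)⟩)
  have h := ReachableIn.insert_image_prodMap hf hg (by simp [hfr]) (by simp [hgc]) hpair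
    (ih _ hvalid')
  rwa [himage] at h

section Restore

variable {m n : ℕ}

theorem extremalNFA_stepSet_diff_update {S : Set (Fin m × Fin n)} {r : Fin m} {c q : Fin n}
    (hrc : (r, c) ∈ S) (hcol : ∀ i, (i, c) ∈ S → i = r) (hrq : (r, q) ∈ S)
    (hqc : q ≠ c) : (extremalNFA m n).stepSet (S \ {(r, q)}) (id, Function.update id c q) = S := by
  ext x
  simp only [NFA.mem_stepSet, extremalNFA_step, Set.mem_insert_iff, Set.mem_singleton_iff]
  constructor
  · rintro ⟨⟨i, j⟩, ⟨hij, -⟩, rfl | rfl⟩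
    · exact hij
    · by_cases hj : j = c
      · subst hj
        simpa [hcol i hij] using hrq
      · simpa [hj] using hij
  · intro hx
    by_cases hxq : x = (r, q)
    · exact ⟨(r, c), ⟨hrc, by simp [hqc.symm]⟩, Or.inr (by simp [hxq])⟩
    · exact ⟨x, ⟨hx, hxq⟩, Or.inl rfl⟩

theorem ReachableIn.of_diff_singleton {S : Set (Fin m × Fin n)} {r : Fin m} {c q : Fin n}
    (hrc : (r, c) ∈ S) (hcol : ∀ i, (i, c) ∈ S → i = r) (hrq : (r, q) ∈ S) (hqc : q ≠ c)
    (h : ReachableIn (S \ {(r, q)})) : ReachableIn S := by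
  simpa only [extremalNFA_stepSet_diff_update hrc hcol hrq hqc] using
    h.stepSet (id, Function.update id c q)

theorem ValidSubset.diff_singleton {S : Set (Fin (m + 1) × Fin (n + 1))} (hS : ValidSubset S)
    {r : Fin (m + 1)} {c q : Fin (n + 1)} (hrc : (r, c) ∈ S) (hqc : q ≠ c)
    (hq : q ≠ 0 ∨ ∃ i ≠ r, (i, 0) ∈ S) : ValidSubset (S \ {(r, q)}) := by
  obtain ⟨⟨x, hx, hx0⟩, ⟨y, hy, hy0⟩⟩ := validSubset_iff.1 hS
  refine validSubset_iff.2 ⟨?_, ?_⟩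
  · rcases hq with hq | ⟨i, hir, hi⟩
    · exact ⟨x, ⟨hx, fun h => hq (by rw [← hx0, Set.mem_singleton_iff.1 h])⟩, hx0⟩
    · exact ⟨(i, 0), ⟨hi, by simp [hir]⟩, rfl⟩
  · by_cases hr : r = 0
    · exact ⟨(r, c), ⟨hrc, by simp [hqc.symm]⟩, hr⟩
    · exact ⟨y, ⟨hy, fun h => hr (by rw [← hy0, Set.mem_singleton_iff.1 h])⟩, hy0⟩

theorem reachableIn_of_unique_in_column_of_mem_row {S : Set (Fin (m + 1) × Fin (n + 1))}
    (hS : ValidSubset S) {r : Fin (m + 1)} {c q : Fin (n + 1)} (hrc : (r, c) ∈ S)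
    (hcol : ∀ i, (i, c) ∈ S → i = r) (hrq : (r, q) ∈ S) (hqc : q ≠ c)
    (ih : ∀ S' : Set (Fin (m + 1) × Fin (n + 1)), ValidSubset S' → S'.ncard < S.ncard →
      ReachableIn S') :
    ReachableIn S := by
  have ih_diff : ∀ x ∈ S, ValidSubset (S \ {x}) → ReachableIn (S \ {x}) := fun x hx hvalid =>
    ih _ hvalid (Set.ncard_sdiff_singleton_lt_of_mem hx S.toFinite)
  by_cases hq : q ≠ 0 ∨ ∃ i ≠ r, (i, 0) ∈ S
  · exact .of_diff_singleton hrc hcol hrq hqc (ih_diff _ hrq (hS.diff_singleton hrc hqc hq))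
  · push Not at hq
    obtain ⟨rfl, hcol0⟩ := hq
    refine .of_diff_singleton hrq (fun i hi => ?_) hrc hqc.symm
      (ih_diff _ hrc (hS.diff_singleton hrq hqc.symm (.inl hqc.symm)))
    by_contra hir
    exact hcol0 i hir hi

end Restore

theorem reachableIn_of_unique_in_column {m n : ℕ} {S : Set (Fin (m + 2) × Fin (n + 2))}
    (hS : ValidSubset S) {r : Fin (m + 2)} {c : Fin (n + 2)} (hrc : (r, c) ∈ S)
    (hcol : ∀ i, (i, c) ∈ S → i = r)
    (ih_card : ∀ S' : Set (Fin (m + 2) × Fin (n + 2)), ValidSubset S' → S'.ncard < S.ncard →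
      ReachableIn S')
    (ih_dim : ∀ S' : Set (Fin (m + 1) × Fin (n + 1)), ValidSubset S' → ReachableIn S') :
    ReachableIn S := by
  by_cases hrow : ∀ q, (r, q) ∈ S → q = c
  · have hS_eq : S = insert (r, c) (S \ {(r, c)}) := by
      rw [Set.insert_sdiff_singleton, Set.insert_eq_of_mem hrc]
    rcases (S \ {(r, c)}).eq_empty_or_nonempty with hempty | hne
    · rw [hS_eq, hempty] at hS ⊢
      simpa using reachableIn_pair_of_validSubset (p := (r, c)) (q := (r, c)) (by simpa using hS)
    rw [hS_eq] at hS ⊢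
    refine reachableIn_insert_of_isolated (fun x hx hxr => ?_) (fun x hx hxc => ?_) hne hS ih_dim
    · exact hx.2 (Prod.ext hxr (hrow _ (hxr ▸ hx.1)))
    · exact hx.2 (Prod.ext (hcol _ (hxc ▸ hx.1)) hxc)
  · push Not at hrow
    obtain ⟨q, hrq, hqc⟩ := hrow
    exact reachableIn_of_unique_in_column_of_mem_row hS hrc hcol hrq hqc ih_card

/-- Let `m, n ≥ 2` and let `S` be a valid subset with a column or a row containing
exactly one element. If every valid subset `S'` of `Q_{m'} × Q_{n'}` with `m' < m`,
or `n' < n`, or `|S'| < |S|` is reachable in `𝒟_{m',n'}`, then `S` is reachable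
in `𝒟_{m,n}`. -/
theorem stmt_9 {m n : ℕ} (hm : 2 ≤ m) (hn : 2 ≤ n) (S : Set (Fin m × Fin n))
    (hvalid : ValidSubset S)
    (hsingle :
      (∃ j : Fin n, ∃! i : Fin m, (i, j) ∈ S) ∨
      (∃ i : Fin m, ∃! j : Fin n, (i, j) ∈ S))
    (ih : ∀ (m' n' : ℕ) (S' : Set (Fin m' × Fin n')), ValidSubset S' →
      (m' < m ∨ n' < n ∨ S'.ncard < S.ncard) → ReachableIn S') :
    ReachableIn S := by
  obtain ⟨m, rfl⟩ : ∃ k, m = k + 2 := ⟨m - 2, by omega⟩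
  obtain ⟨n, rfl⟩ : ∃ k, n = k + 2 := ⟨n - 2, by omega⟩
  rcases hsingle with ⟨c, r, hrc, hcol⟩ | ⟨r, c, hrc, hrow⟩
  · exact reachableIn_of_unique_in_column hvalid hrc hcol
      (fun S' hS' hlt => ih _ _ S' hS' (.inr (.inr hlt)))
      (fun S' hS' => ih _ _ S' hS' (.inl (by omega)))
  · have hcard : (Prod.swap '' S).ncard = S.ncard :=
      Set.ncard_image_of_injective S Prod.swap_injective
    have h := reachableIn_of_unique_in_column hvalid.image_swap (Set.mem_image_of_mem _ hrc)
      (fun j hj => hrow j (by simpa [Set.image_swap_eq_preimage_swap] using hj))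
      (fun S' hS' hlt => ih _ _ S' hS' (.inr (.inr (hcard ▸ hlt))))
      (fun S' hS' => ih _ _ S' hS' (by omega))
    simpa [Set.image_swap_eq_preimage_swap, Set.preimage_preimage] using h.image_swap
end

section
/- Let q be a uniquely distinguishable state of an NFA 𝒜 = (Q, Σ, δ, s, F), and suppose there is a letter a ∈ Σ and exactly one state p ∈ Q with q ∈ δ(p, a) (i.e., (p, a, q) is a unique in-transition on a going to q). Then p is uniquely distinguishable as well. -/
/-! If `w` distinguishes `q`, then `a :: w` distinguishes `p`: from `r` it is accepted iff some
`a`-successor of `r` accepts `w`, i.e. iff `q ∈ δ(r, a)`, i.e. iff `r = p`. -/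

namespace NFA

variable {α σ : Type*} (A : NFA α σ)

theorem evalFrom_inter_accept_nonempty_iff (S : Set σ) (w : List α) :
    (A.evalFrom S w ∩ A.accept).Nonempty ↔
      ∃ t ∈ S, (A.evalFrom {t} w ∩ A.accept).Nonempty := by
  rw [evalFrom_eq_biUnion_singleton, Set.iUnion₂_inter]
  simp only [Set.nonempty_iUnion, exists_prop]

theorem evalFrom_singleton_cons (r : σ) (a : α) (w : List α) :
    A.evalFrom {r} (a :: w) = A.evalFrom (A.step r a) w := by
  rw [evalFrom_cons, stepSet_singleton]

end NFA

/-- If `q` is a uniquely distinguishable state of an NFA `𝒜` and `(p, a, q)` is the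
unique in-transition on the letter `a` going to `q`, then `p` is uniquely
distinguishable as well. -/
theorem stmt_15 {α σ : Type*} (A : NFA α σ) (q : σ)
    (hq : ∃ w : List α,
      ∀ r : σ, (A.evalFrom {r} w ∩ A.accept).Nonempty ↔ r = q)
    (a : α) (p : σ) (hpq : q ∈ A.step p a)
    (huniq : ∀ r : σ, q ∈ A.step r a → r = p) :
    ∃ w : List α,
      ∀ r : σ, (A.evalFrom {r} w ∩ A.accept).Nonempty ↔ r = p := by
  obtain ⟨w, hw⟩ := hq
  refine ⟨a :: w, fun r => ?_⟩
  calc (A.evalFrom {r} (a :: w) ∩ A.accept).Nonempty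
      ↔ ∃ t ∈ A.step r a, t = q := by
        rw [A.evalFrom_singleton_cons, A.evalFrom_inter_accept_nonempty_iff]
        simp only [hw]
    _ ↔ q ∈ A.step r a := by simp
    _ ↔ r = p := ⟨huniq r, fun hr => hr ▸ hpq⟩
end
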